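/- Let F(x) = ∏_{i=1}^g (x - x_i) with distinct x_i, and for a point x' distinct from all x_i define the differential operator D = Σ_{i=1}^g (y_i F(x'))/(F'(x_i)(x' - x_i)) · ∂/∂x_i acting on smooth functions of (x₁,…,x_g). Then for two such points x'_a, x'_b (both distinct from all x_i and from each other), with y_i = y(x_i) given by y_i² = f(x_i) for a fixed polynomial f, the operators D_a and D_b commute: [D_a, D_b] = 0. -/

import Mathlib

open Finset

/-- The vector field `D = Σᵢ yᵢ F(p)/(F'(xᵢ)(p - xᵢ)) ∂/∂xᵢ`, attached to a fixed
point with `x`-coordinate `p`, acting on functions of `(x₁,…,x_g)`; here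
`F(s) = ∏ⱼ (s - xⱼ)`, `F'(xᵢ) = ∏_{j≠i} (xᵢ - xⱼ)`, and `yᵢ = y(xᵢ)` varies on
the curve `y² = f(x)`. -/
noncomputable def Dop {g : ℕ} (y : ℝ → ℝ) (p : ℝ)
    (h : (Fin g → ℝ) → ℝ) (x : Fin g → ℝ) : ℝ :=
  ∑ i, (y (x i) * (∏ j, (p - x j)) /
      ((∏ j ∈ Finset.univ.erase i, (x i - x j)) * (p - x i)))
    * fderiv ℝ h x (Pi.single i 1)

namespace DopAux

variable {g : ℕ}

/-- The coefficient of `∂/∂xⱼ` in `Dop`. -/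
noncomputable def cf (y : ℝ → ℝ) (p : ℝ) (j : Fin g) (x : Fin g → ℝ) : ℝ :=
  y (x j) * (∏ k, (p - x k)) /
    ((∏ k ∈ Finset.univ.erase j, (x j - x k)) * (p - x j))

lemma d1_ne {x : Fin g → ℝ} (hx : Function.Injective x) (j : Fin g) :
    (∏ k ∈ univ.erase j, (x j - x k)) ≠ 0 :=
  Finset.prod_ne_zero_iff.2 fun k hk =>
    sub_ne_zero.2 (hx.ne (Finset.ne_of_mem_erase hk).symm)

lemma hasFDerivAt_cf (y : ℝ → ℝ) (hy : ContDiff ℝ (⊤ : ℕ∞) y) (q : ℝ) (j : Fin g)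
    {x : Fin g → ℝ} (hx : Function.Injective x) (hxq : ∀ k, x k ≠ q) :
    HasFDerivAt (cf y q j)
      ((y (x j) * ∏ k, (q - x k)) •
          ((-(((∏ k ∈ univ.erase j, (x j - x k)) * (q - x j)) ^ 2)⁻¹) •
            ((∏ k ∈ univ.erase j, (x j - x k)) •
                (-(ContinuousLinearMap.proj j : (Fin g → ℝ) →L[ℝ] ℝ))
              + (q - x j) • ∑ k ∈ univ.erase j,
                  (∏ m ∈ (univ.erase j).erase k, (x j - x m)) •
                    ((ContinuousLinearMap.proj j : (Fin g → ℝ) →L[ℝ] ℝ)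
                      - ContinuousLinearMap.proj k)))
        + (((∏ k ∈ univ.erase j, (x j - x k)) * (q - x j))⁻¹) •
          ((y (x j)) • (∑ k, (∏ m ∈ univ.erase k, (q - x m)) •
              (-(ContinuousLinearMap.proj k : (Fin g → ℝ) →L[ℝ] ℝ)))
            + (∏ k, (q - x k)) •
              (deriv y (x j) • (ContinuousLinearMap.proj j : (Fin g → ℝ) →L[ℝ] ℝ)))) x := by
  have hyd : Differentiable ℝ y := hy.differentiable (by simp)
  have hA : HasFDerivAt (fun z : Fin g → ℝ => y (z j))
      (deriv y (x j) • (ContinuousLinearMap.proj j : (Fin g → ℝ) →L[ℝ] ℝ)) x :=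
    (hyd (x j)).hasDerivAt.comp_hasFDerivAt x (hasFDerivAt_apply j x)
  have hN : HasFDerivAt (fun z : Fin g → ℝ => ∏ k, (q - z k))
      (∑ k, (∏ m ∈ univ.erase k, (q - x m)) •
        (-(ContinuousLinearMap.proj k : (Fin g → ℝ) →L[ℝ] ℝ))) x :=
    HasFDerivAt.finset_prod fun k _ => (hasFDerivAt_apply k x).const_sub q
  have hd1 : HasFDerivAt (fun z : Fin g → ℝ => ∏ k ∈ univ.erase j, (z j - z k))
      (∑ k ∈ univ.erase j, (∏ m ∈ (univ.erase j).erase k, (x j - x m)) •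
        ((ContinuousLinearMap.proj j : (Fin g → ℝ) →L[ℝ] ℝ)
          - ContinuousLinearMap.proj k)) x :=
    HasFDerivAt.finset_prod fun k _ => (hasFDerivAt_apply j x).sub (hasFDerivAt_apply k x)
  have hd2 : HasFDerivAt (fun z : Fin g → ℝ => q - z j)
      (-(ContinuousLinearMap.proj j : (Fin g → ℝ) →L[ℝ] ℝ)) x :=
    (hasFDerivAt_apply j x).const_sub q
  have hden := hd1.mul hd2
  have hne : (∏ k ∈ univ.erase j, (x j - x k)) * (q - x j) ≠ 0 :=
    mul_ne_zero (d1_ne hx j) (sub_ne_zero.2 (Ne.symm (hxq j)))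
  have hinv := (hasDerivAt_inv hne).comp_hasFDerivAt x hden
  have htop := hA.mul hN
  have hcf := htop.mul hinv
  have heq : cf y q j = fun z : Fin g → ℝ =>
      (y (z j) * ∏ k, (q - z k)) *
        ((∏ k ∈ univ.erase j, (z j - z k)) * (q - z j))⁻¹ := by
    funext z; rw [cf, div_eq_mul_inv]
  rw [heq]
  exact hcf

lemma fderiv_cf (y : ℝ → ℝ) (hy : ContDiff ℝ (⊤ : ℕ∞) y) (q : ℝ) (i j : Fin g)
    {x : Fin g → ℝ} (hx : Function.Injective x) (hxq : ∀ k, x k ≠ q) :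
    fderiv ℝ (cf y q j) x (Pi.single i 1) =
      (y (x j) * ∏ k, (q - x k)) *
          ((-(((∏ k ∈ univ.erase j, (x j - x k)) * (q - x j)) ^ 2)⁻¹) *
            ((∏ k ∈ univ.erase j, (x j - x k)) * (-(if j = i then (1:ℝ) else 0))
              + (q - x j) * ∑ k ∈ univ.erase j,
                  (∏ m ∈ (univ.erase j).erase k, (x j - x m)) *
                    ((if j = i then (1:ℝ) else 0) - (if k = i then (1:ℝ) else 0))))
        + (((∏ k ∈ univ.erase j, (x j - x k)) * (q - x j))⁻¹) *
          ((y (x j)) * (∑ k, (∏ m ∈ univ.erase k, (q - x m)) *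
              (-(if k = i then (1:ℝ) else 0)))
            + (∏ k, (q - x k)) * (deriv y (x j) * (if j = i then (1:ℝ) else 0))) := by
  rw [(hasFDerivAt_cf y hy q j hx hxq).fderiv]
  simp only [ContinuousLinearMap.add_apply, ContinuousLinearMap.smul_apply,
    ContinuousLinearMap.sum_apply, ContinuousLinearMap.neg_apply,
    ContinuousLinearMap.sub_apply, ContinuousLinearMap.proj_apply,
    Pi.single_apply, smul_eq_mul]

lemma dji_ne {x : Fin g → ℝ} (hx : Function.Injective x) (i j : Fin g) :
    (∏ m ∈ (univ.erase j).erase i, (x j - x m)) ≠ 0 :=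
  Finset.prod_ne_zero_iff.2 fun m hm =>
    sub_ne_zero.2 (hx.ne (Finset.ne_of_mem_erase (Finset.mem_of_mem_erase hm)).symm)

lemma fderiv_cf_ne (y : ℝ → ℝ) (hy : ContDiff ℝ (⊤ : ℕ∞) y) (q : ℝ) {i j : Fin g} (hij : i ≠ j)
    {x : Fin g → ℝ} (hx : Function.Injective x) (hxq : ∀ k, x k ≠ q) :
    fderiv ℝ (cf y q j) x (Pi.single i 1) =
      y (x j) * (q - x j) * (∏ m ∈ (univ.erase j).erase i, (q - x m)) /
        ((x j - x i) ^ 2 * ∏ m ∈ (univ.erase j).erase i, (x j - x m)) := by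
  rw [fderiv_cf y hy q i j hx hxq]
  have hji : j ≠ i := hij.symm
  have e1 : (∏ k, (q - x k)) = (q - x i) * ∏ m ∈ univ.erase i, (q - x m) :=
    (Finset.mul_prod_erase univ _ (mem_univ i)).symm
  have e2 : (∏ m ∈ univ.erase i, (q - x m))
      = (q - x j) * ∏ m ∈ (univ.erase j).erase i, (q - x m) := by
    rw [← Finset.mul_prod_erase (univ.erase i) (fun m => q - x m)
        (show j ∈ univ.erase i by simp [Finset.mem_erase, hji]), Finset.erase_right_comm]
  have e3 : (∏ k ∈ univ.erase j, (x j - x k))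
      = (x j - x i) * ∏ m ∈ (univ.erase j).erase i, (x j - x m) :=
    (Finset.mul_prod_erase (univ.erase j) (fun k => x j - x k)
      (show i ∈ univ.erase j by simp [Finset.mem_erase, hij])).symm
  have hsum : (∑ k ∈ univ.erase j, (∏ m ∈ (univ.erase j).erase k, (x j - x m)) *
      ((if j = i then (1:ℝ) else 0) - (if k = i then (1:ℝ) else 0)))
      = -(∏ m ∈ (univ.erase j).erase i, (x j - x m)) := by
    simp [if_neg hji, zero_sub, mul_neg, mul_ite, mul_one, mul_zero,
      Finset.sum_ite_eq', Finset.mem_erase, hij]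
  have hsum2 : (∑ k, (∏ m ∈ univ.erase k, (q - x m)) * (-(if k = i then (1:ℝ) else 0)))
      = -(∏ m ∈ univ.erase i, (q - x m)) := by
    simp [mul_neg, mul_ite, mul_one, mul_zero, Finset.sum_ite_eq']
  rw [hsum, hsum2]
  simp only [if_neg hji]
  rw [e1, e2, e3]
  have hqi : q - x i ≠ 0 := sub_ne_zero.2 (Ne.symm (hxq i))
  have hqj : q - x j ≠ 0 := sub_ne_zero.2 (Ne.symm (hxq j))
  have hji' : x j - x i ≠ 0 := sub_ne_zero.2 (hx.ne hji)
  have hDji := dji_ne hx i j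
  field_simp
  ring

lemma fderiv_cf_self (y : ℝ → ℝ) (hy : ContDiff ℝ (⊤ : ℕ∞) y) (q : ℝ) (j : Fin g)
    {x : Fin g → ℝ} (hx : Function.Injective x) (hxq : ∀ k, x k ≠ q) :
    fderiv ℝ (cf y q j) x (Pi.single j 1) =
      (∏ m ∈ univ.erase j, (q - x m)) *
        ((∏ k ∈ univ.erase j, (x j - x k)) * deriv y (x j)
          - y (x j) * ∑ k ∈ univ.erase j, ∏ m ∈ (univ.erase j).erase k, (x j - x m))
      / (∏ k ∈ univ.erase j, (x j - x k)) ^ 2 := by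
  rw [fderiv_cf y hy q j j hx hxq]
  have hsum : (∑ k ∈ univ.erase j, (∏ m ∈ (univ.erase j).erase k, (x j - x m)) *
      ((if j = j then (1:ℝ) else 0) - (if k = j then (1:ℝ) else 0)))
      = ∑ k ∈ univ.erase j, ∏ m ∈ (univ.erase j).erase k, (x j - x m) := by
    refine Finset.sum_congr rfl fun k hk => ?_
    simp [Finset.ne_of_mem_erase hk]
  have hsum2 : (∑ k, (∏ m ∈ univ.erase k, (q - x m)) * (-(if k = j then (1:ℝ) else 0)))
      = -(∏ m ∈ univ.erase j, (q - x m)) := by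
    simp [mul_neg, mul_ite, mul_one, mul_zero, Finset.sum_ite_eq']
  rw [hsum, hsum2]
  simp only [if_pos rfl, eq_self_iff_true, if_true]
  have e1 : (∏ k, (q - x k)) = (q - x j) * ∏ m ∈ univ.erase j, (q - x m) :=
    (Finset.mul_prod_erase univ _ (mem_univ j)).symm
  rw [e1]
  have hqj : q - x j ≠ 0 := sub_ne_zero.2 (Ne.symm (hxq j))
  have hd1 := d1_ne hx j
  field_simp
  ring

lemma cf_key (y : ℝ → ℝ) (hy : ContDiff ℝ (⊤ : ℕ∞) y) (p q : ℝ) (i j : Fin g)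
    {x : Fin g → ℝ} (hx : Function.Injective x)
    (hxp : ∀ k, x k ≠ p) (hxq : ∀ k, x k ≠ q) :
    cf y p i x * fderiv ℝ (cf y q j) x (Pi.single i 1)
      = cf y q i x * fderiv ℝ (cf y p j) x (Pi.single i 1) := by
  rcases eq_or_ne i j with rfl | hij
  · rw [fderiv_cf_self y hy q i hx hxq, fderiv_cf_self y hy p i hx hxp, cf, cf]
    rw [show (∏ k, (p - x k)) = (p - x i) * ∏ m ∈ univ.erase i, (p - x m) from
        (Finset.mul_prod_erase univ _ (mem_univ i)).symm,
      show (∏ k, (q - x k)) = (q - x i) * ∏ m ∈ univ.erase i, (q - x m) from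
        (Finset.mul_prod_erase univ _ (mem_univ i)).symm]
    have hpi : p - x i ≠ 0 := sub_ne_zero.2 (Ne.symm (hxp i))
    have hqi : q - x i ≠ 0 := sub_ne_zero.2 (Ne.symm (hxq i))
    have hd1 := d1_ne hx i
    field_simp
  · rw [fderiv_cf_ne y hy q hij hx hxq, fderiv_cf_ne y hy p hij hx hxp, cf, cf]
    have e2 : ∀ r : ℝ, (∏ m ∈ univ.erase i, (r - x m))
        = (r - x j) * ∏ m ∈ (univ.erase j).erase i, (r - x m) := by
      intro r
      rw [← Finset.mul_prod_erase (univ.erase i) (fun m => r - x m)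
          (show j ∈ univ.erase i by simp [Finset.mem_erase, hij.symm]),
        Finset.erase_right_comm]
    rw [show (∏ k, (p - x k)) = (p - x i) * ∏ m ∈ univ.erase i, (p - x m) from
        (Finset.mul_prod_erase univ _ (mem_univ i)).symm,
      show (∏ k, (q - x k)) = (q - x i) * ∏ m ∈ univ.erase i, (q - x m) from
        (Finset.mul_prod_erase univ _ (mem_univ i)).symm,
      e2 p, e2 q,
      show (∏ k ∈ univ.erase i, (x i - x k))
          = (x i - x j) * ∏ m ∈ (univ.erase i).erase j, (x i - x m) from
        (Finset.mul_prod_erase (univ.erase i) (fun k => x i - x k)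
          (show j ∈ univ.erase i by simp [Finset.mem_erase, hij.symm])).symm]
    have hpi : p - x i ≠ 0 := sub_ne_zero.2 (Ne.symm (hxp i))
    have hqi : q - x i ≠ 0 := sub_ne_zero.2 (Ne.symm (hxq i))
    have hpj : p - x j ≠ 0 := sub_ne_zero.2 (Ne.symm (hxp j))
    have hqj : q - x j ≠ 0 := sub_ne_zero.2 (Ne.symm (hxq j))
    have hij' : x i - x j ≠ 0 := sub_ne_zero.2 (hx.ne hij)
    have hji' : x j - x i ≠ 0 := sub_ne_zero.2 (hx.ne hij.symm)
    have hDji := dji_ne hx i j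
    have hDij : (∏ m ∈ (univ.erase i).erase j, (x i - x m)) ≠ 0 :=
      Finset.prod_ne_zero_iff.2 fun m hm =>
        sub_ne_zero.2 (hx.ne (Finset.ne_of_mem_erase (Finset.mem_of_mem_erase hm)).symm)
    field_simp

lemma differentiableAt_cf (y : ℝ → ℝ) (hy : ContDiff ℝ (⊤ : ℕ∞) y) (q : ℝ) (j : Fin g)
    {x : Fin g → ℝ} (hx : Function.Injective x) (hxq : ∀ k, x k ≠ q) :
    DifferentiableAt ℝ (cf y q j) x :=
  (hasFDerivAt_cf y hy q j hx hxq).differentiableAt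

end DopAux

open DopAux

/-- For two fixed points of the hyperelliptic curve `y² = f(x)` with distinct
`x`-coordinates `a ≠ b`, both distinct from the (pairwise distinct) coordinates
`xᵢ`, the vector fields `D_a` and `D_b` commute: `[D_a, D_b] = 0`. -/
theorem Dop_comm (g : ℕ) (f : Polynomial ℝ) (y : ℝ → ℝ)
    (hy : ContDiff ℝ (⊤ : ℕ∞) y) (hyf : ∀ s, y s ^ 2 = f.eval s)
    (a b : ℝ) (hab : a ≠ b)
    (h : (Fin g → ℝ) → ℝ) (hh : ContDiff ℝ (⊤ : ℕ∞) h)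
    (x : Fin g → ℝ) (hx : Function.Injective x)
    (hxa : ∀ i, x i ≠ a) (hxb : ∀ i, x i ≠ b) :
    Dop y a (Dop y b h) x = Dop y b (Dop y a h) x := by
  have hdh : Differentiable ℝ h := hh.differentiable (by simp)
  have hf' : Differentiable ℝ (fderiv ℝ h) := (hh.fderiv_right (m := (⊤ : ℕ∞)) (by simp)).differentiable (by simp)
  have hpd : ∀ j : Fin g, Differentiable ℝ (fun z => fderiv ℝ h z (Pi.single j 1)) :=
    fun j => ((hh.fderiv_right (m := (⊤ : ℕ∞)) (by simp)).clm_apply contDiff_const).differentiable (by simp)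
  have hHd : ∀ i j : Fin g,
      fderiv ℝ (fun z => fderiv ℝ h z (Pi.single j 1)) x (Pi.single i 1)
        = fderiv ℝ (fun z => fderiv ℝ h z (Pi.single i 1)) x (Pi.single j 1) := by
    intro i j
    have e : ∀ u : Fin g → ℝ,
        fderiv ℝ (fun z => fderiv ℝ h z u) x = (fderiv ℝ (fderiv ℝ h) x).flip u := by
      intro u
      rw [fderiv_clm_apply (hf' x) (differentiableAt_const u)]
      simp
    rw [e, e]
    simp only [ContinuousLinearMap.flip_apply]
    exact second_derivative_symmetric (fun z => (hdh z).hasFDerivAt)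
      (hf' x).hasFDerivAt _ _
  have expand : ∀ (p q : ℝ), (∀ i, x i ≠ p) → (∀ i, x i ≠ q) →
      Dop y p (Dop y q h) x =
        ∑ i, ∑ j, (cf y p i x * cf y q j x *
            fderiv ℝ (fun z => fderiv ℝ h z (Pi.single j 1)) x (Pi.single i 1)
          + cf y p i x * fderiv ℝ h x (Pi.single j 1) *
            fderiv ℝ (cf y q j) x (Pi.single i 1)) := by
    intro p q hp hq
    rw [show Dop y p (Dop y q h) x = ∑ i, cf y p i x *
        fderiv ℝ (fun z => ∑ j, cf y q j z * fderiv ℝ h z (Pi.single j 1)) x (Pi.single i 1)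
      from rfl]
    refine Finset.sum_congr rfl fun i _ => ?_
    rw [fderiv_fun_sum (A := fun j z => cf y q j z * fderiv ℝ h z (Pi.single j 1)) fun j _ =>
      (differentiableAt_cf y hy q j hx hq).mul ((hpd j) x)]
    rw [ContinuousLinearMap.sum_apply, Finset.mul_sum]
    refine Finset.sum_congr rfl fun j _ => ?_
    rw [fderiv_fun_mul (differentiableAt_cf y hy q j hx hq) ((hpd j) x)]
    simp only [ContinuousLinearMap.add_apply, ContinuousLinearMap.smul_apply, smul_eq_mul]
    ring
  rw [expand a b hxa hxb, expand b a hxb hxa]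
  rw [Finset.sum_congr rfl fun i _ => Finset.sum_add_distrib, Finset.sum_add_distrib,
    Finset.sum_congr (ι := Fin g) rfl (fun i _ => Finset.sum_add_distrib), Finset.sum_add_distrib]
  congr 1
  · rw [Finset.sum_comm]
    refine Finset.sum_congr rfl fun i _ => Finset.sum_congr rfl fun j _ => ?_
    rw [hHd j i]
    ring
  · refine Finset.sum_congr rfl fun i _ => Finset.sum_congr rfl fun j _ => ?_
    rw [mul_right_comm, cf_key y hy a b i j hx hxa hxb, mul_right_comm]
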